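/- Let α, τ, ξ be real numbers with 0 < α < 1/2, α ≤ τ < 1 and ξ ≥ 1/4. Then |T_s| > 2/π and 2/π > |T_B|, where |·| denotes the complex modulus. -/

import Mathlib

/-- The term `T_s` of the generalised Fredholm symbol on the segment `Γ₁`. -/
noncomputable def Ts (α τ ξ : ℝ) : ℂ :=
  Complex.sin ((Real.pi : ℂ) * (1 - (τ : ℂ) + (α : ℂ) - Complex.I * (ξ : ℂ))) /
    Complex.sin ((Real.pi : ℂ) * (1 - (τ : ℂ) + 2 * (α : ℂ) - Complex.I * (ξ : ℂ)))

/-- The term `T_B` of the generalised Fredholm symbol on the segment `Γ₁`. -/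
noncomputable def TB (α τ ξ : ℝ) : ℂ :=
  Complex.sin ((Real.pi : ℂ) * (α : ℂ)) / (Real.pi : ℂ) *
      Complex.Gamma ((τ : ℂ) - 2 * (α : ℂ) + 1 + Complex.I * (ξ : ℂ)) *
      Complex.Gamma (2 * (α : ℂ)) /
    Complex.Gamma ((τ : ℂ) + 1 + Complex.I * (ξ : ℂ))

/-!
Since `|sin (x + iy)|² = sin² x + sinh² y`, the numerator and denominator of `T_s` lie between
`sinh (πξ)` and `cosh (πξ)`, so `|T_s| ≥ tanh (πξ) ≥ tanh (π/4) > 2/π`.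

For `T_B`, `Γ(u)Γ(v)/Γ(u+v)` is the Beta integral, whose modulus is at most the Beta function of
the real parts, and the Beta function decreases in its first argument. As
`Re (τ - 2α + 1 + iξ) ≥ 1 - α`, we get `|T_B| ≤ sin (πα) B(1-α, 2α) / π = 1 / (α B(α, α))` by the
reflection formula. Finally `B(α, α) = 2 ∫₀^{1/2} (t(1-t))^{α-1} dt`, and substituting
`t = sin² θ` and using `sin θ cos θ ≤ θ` gives `B(α, α) ≥ 2 (π/4)^{2α} / α > π / (2α)`.
-/

open Real MeasureTheory ProbabilityTheory intervalIntegral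

theorem Complex.norm_sin_sq (z : ℂ) :
    ‖Complex.sin z‖ ^ 2 = Real.sin z.re ^ 2 + Real.sinh z.im ^ 2 := by
  conv_lhs => rw [← z.re_add_im, Complex.sin_add_mul_I]
  rw [← Complex.ofReal_sin, ← Complex.ofReal_cos, ← Complex.ofReal_sinh, ← Complex.ofReal_cosh,
    Complex.sq_norm, ← Complex.ofReal_mul, ← Complex.ofReal_mul, Complex.normSq_add_mul_I]
  nlinarith [Real.sin_sq_add_cos_sq z.re, Real.cosh_sq z.im]

theorem Complex.abs_sinh_im_le_norm_sin (z : ℂ) : |Real.sinh z.im| ≤ ‖Complex.sin z‖ :=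
  abs_le_of_sq_le_sq (by nlinarith [z.norm_sin_sq, sq_nonneg (Real.sin z.re)]) (norm_nonneg _)

theorem Complex.norm_sin_le_cosh_im (z : ℂ) : ‖Complex.sin z‖ ≤ Real.cosh z.im := by
  refine (sq_le_sq₀ (norm_nonneg _) (Real.cosh_pos _).le).1 ?_
  rw [z.norm_sin_sq, Real.cosh_sq]
  nlinarith [Real.sin_sq_le_one z.re]

theorem two_mul_cosh_lt_pi_mul_sinh {y : ℝ} (hy : π / 4 ≤ y) : 2 * cosh y < π * sinh y := by
  -- `(π + 2) / (π - 2) < 4.7 < exp (π / 2)`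
  have hexp : 4.7 < exp y ^ 2 := calc
    (4.7 : ℝ) < exp 1 * (1 + 0.57 + 0.57 ^ 2 / 2) := by nlinarith [exp_one_gt_d9]
    _ ≤ exp 1 * exp 0.57 := by gcongr; exact quadratic_le_exp_of_nonneg (by norm_num)
    _ = exp 1.57 := by rw [← exp_add]; norm_num
    _ ≤ exp y ^ 2 := by rw [← exp_nat_mul]; gcongr; linarith [pi_gt_d2]
  have hpos := exp_pos y
  rw [cosh_eq, sinh_eq, exp_neg]
  field_simp
  nlinarith [pi_gt_d2]

theorem two_div_pi_lt_norm_Ts (α τ : ℝ) {ξ : ℝ} (hξ : 1 / 4 ≤ ξ) : 2 / π < ‖Ts α τ ξ‖ := by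
  have hy : π / 4 ≤ π * ξ := by nlinarith [pi_pos]
  have hsinh : 0 < sinh (π * ξ) := sinh_pos_iff.2 (by linarith [pi_pos])
  have bounds (β : ℂ) (hβ : β.im = 0) :
      sinh (π * ξ) ≤ ‖Complex.sin (π * (1 - τ + β - Complex.I * ξ))‖ ∧
        ‖Complex.sin (π * (1 - τ + β - Complex.I * ξ))‖ ≤ cosh (π * ξ) := by
    simpa [hβ, abs_of_pos hsinh] using
      And.intro (Complex.abs_sinh_im_le_norm_sin (π * (1 - τ + β - Complex.I * ξ)))
        (Complex.norm_sin_le_cosh_im (π * (1 - τ + β - Complex.I * ξ)))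
  have hnum := bounds α (Complex.ofReal_im α)
  have hden := bounds (2 * α) (by simp)
  calc 2 / π < sinh (π * ξ) / cosh (π * ξ) := by
        rw [div_lt_div_iff₀ pi_pos (cosh_pos _)]; linarith [two_mul_cosh_lt_pi_mul_sinh hy]
    _ ≤ ‖Ts α τ ξ‖ := by
        rw [Ts, norm_div]
        exact div_le_div₀ (norm_nonneg _) hnum.1 (hsinh.trans_le hden.1) hden.2

theorem Complex.norm_ofReal_cpow_le {x : ℝ} (hx : 0 ≤ x) (w : ℂ) : ‖(x : ℂ) ^ w‖ ≤ x ^ w.re := by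
  simpa [Complex.arg_ofReal_of_nonneg hx, abs_of_nonneg hx] using Complex.norm_cpow_le x w

theorem Complex.ofReal_cpow_mul_one_sub_cpow {a b t : ℝ} (ht : t ∈ Set.Icc 0 1) :
    (t : ℂ) ^ ((a : ℂ) - 1) * (1 - (t : ℂ)) ^ ((b : ℂ) - 1) =
      ((t ^ (a - 1) * (1 - t) ^ (b - 1) : ℝ) : ℂ) := by
  push_cast [Complex.ofReal_cpow ht.1, Complex.ofReal_cpow (sub_nonneg.2 ht.2)]
  rfl

theorem Complex.betaIntegral_ofReal (a b : ℝ) :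
    Complex.betaIntegral a b = ((∫ t in (0 : ℝ)..1, t ^ (a - 1) * (1 - t) ^ (b - 1) : ℝ) : ℂ) := by
  rw [Complex.betaIntegral, ← integral_ofReal]
  refine integral_congr fun t ht => ?_
  rw [Set.uIcc_of_le zero_le_one] at ht
  exact Complex.ofReal_cpow_mul_one_sub_cpow ht

theorem intervalIntegrable_rpow_mul_one_sub_rpow {a b : ℝ} (ha : 0 < a) (hb : 0 < b) :
    IntervalIntegrable (fun t : ℝ => t ^ (a - 1) * (1 - t) ^ (b - 1)) volume 0 1 := by
  refine (intervalIntegrable_iff_integrableOn_Ioc_of_le zero_le_one).2 ?_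
  refine IntegrableOn.congr_fun (Complex.betaIntegral_convergent (u := a) (v := b)
    (by simpa) (by simpa)).1.re (fun t ht => ?_) measurableSet_Ioc
  simp only [Complex.ofReal_cpow_mul_one_sub_cpow (Set.Ioc_subset_Icc_self ht)]
  exact Complex.ofReal_re _

theorem ProbabilityTheory.beta_eq_integral {a b : ℝ} (ha : 0 < a) (hb : 0 < b) :
    beta a b = ∫ t in (0 : ℝ)..1, t ^ (a - 1) * (1 - t) ^ (b - 1) := by
  rw [beta_eq_betaIntegralReal a b ha hb, Complex.betaIntegral_ofReal, Complex.ofReal_re]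

theorem Complex.norm_betaIntegral_le {u v : ℂ} (hu : 0 < u.re) (hv : 0 < v.re) :
    ‖Complex.betaIntegral u v‖ ≤ beta u.re v.re := by
  rw [beta_eq_integral hu hv, Complex.betaIntegral]
  refine norm_integral_le_of_norm_le zero_le_one (Filter.Eventually.of_forall fun t ht => ?_)
    (intervalIntegrable_rpow_mul_one_sub_rpow hu hv)
  have h1t : 0 ≤ 1 - t := sub_nonneg.2 ht.2
  rw [norm_mul, ← Complex.ofReal_one, ← Complex.ofReal_sub]
  exact mul_le_mul (by simpa using Complex.norm_ofReal_cpow_le ht.1.le (u - 1))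
    (by simpa using Complex.norm_ofReal_cpow_le h1t (v - 1)) (norm_nonneg _)
    (rpow_nonneg ht.1.le _)

theorem ProbabilityTheory.beta_le_beta_of_le_left {a a' b : ℝ} (ha : 0 < a) (hb : 0 < b)
    (h : a ≤ a') : beta a' b ≤ beta a b := by
  rw [beta_eq_integral (ha.trans_le h) hb, beta_eq_integral ha hb]
  refine integral_mono_on_of_le_Ioo zero_le_one
    (intervalIntegrable_rpow_mul_one_sub_rpow (ha.trans_le h) hb)
    (intervalIntegrable_rpow_mul_one_sub_rpow ha hb) fun t ht => ?_
  exact mul_le_mul_of_nonneg_right (rpow_le_rpow_of_exponent_ge ht.1 ht.2.le (by linarith))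
    (rpow_nonneg (sub_nonneg.2 ht.2.le) _)

theorem ProbabilityTheory.beta_self_eq_two_mul_integral {a : ℝ} (ha : 0 < a) :
    beta a a = 2 * ∫ t in (0 : ℝ)..1 / 2, t ^ (a - 1) * (1 - t) ^ (a - 1) := by
  have hint := intervalIntegrable_rpow_mul_one_sub_rpow ha ha
  have hsymm : ∫ t in (1 / 2 : ℝ)..1, t ^ (a - 1) * (1 - t) ^ (a - 1) =
      ∫ t in (0 : ℝ)..1 / 2, t ^ (a - 1) * (1 - t) ^ (a - 1) := by
    have h := integral_comp_sub_left (a := 0) (b := 1 / 2)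
      (fun t : ℝ => t ^ (a - 1) * (1 - t) ^ (a - 1)) 1
    norm_num at h
    rw [← h]
    simp only [mul_comm]
  rw [beta_eq_integral ha ha, ← integral_add_adjacent_intervals (b := 1 / 2)
    (hint.mono_set (Set.uIcc_subset_uIcc_left (by norm_num [Set.mem_uIcc])))
    (hint.mono_set (Set.uIcc_subset_uIcc_right (by norm_num [Set.mem_uIcc]))), hsymm, two_mul]

theorem hasDerivAt_arcsin_sqrt_rpow_div {a t : ℝ} (ha : a ≠ 0) (ht₀ : 0 < t) (ht₁ : t < 1) :
    HasDerivAt (fun t => arcsin (√t) ^ (2 * a) / a)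
      (arcsin (√t) ^ (2 * a - 1) / √(t * (1 - t))) t := by
  have hs₀ : 0 < √t := sqrt_pos.2 ht₀
  have hs₁ : √t < 1 := by rw [sqrt_lt' one_pos]; linarith
  have harcsin := (hasDerivAt_arcsin (by linarith) hs₁.ne).comp t (hasDerivAt_sqrt ht₀.ne')
  have hrpow := (hasDerivAt_rpow_const (p := 2 * a) (Or.inl (arcsin_pos.2 hs₀).ne')).comp t harcsin
  refine (hrpow.div_const a).congr_deriv ?_
  rw [sq_sqrt ht₀.le, sqrt_mul ht₀.le]
  field_simp

theorem arcsin_sqrt_rpow_div_le {a t : ℝ} (ha : a ≤ 1 / 2) (ht₀ : 0 < t) (ht₁ : t < 1) :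
    arcsin (√t) ^ (2 * a - 1) / √(t * (1 - t)) ≤ t ^ (a - 1) * (1 - t) ^ (a - 1) := by
  have hp : 0 < t * (1 - t) := mul_pos ht₀ (by linarith)
  have hq : 0 < √(t * (1 - t)) := sqrt_pos.2 hp
  -- `√(t(1-t)) = sin θ cos θ ≤ θ` for `θ = arcsin √t`
  have hle : √(t * (1 - t)) ≤ arcsin (√t) := calc
    √(t * (1 - t)) ≤ √t := sqrt_le_sqrt (by nlinarith)
    _ = sin (arcsin (√t)) := (sin_arcsin (by linarith [sqrt_nonneg t]) (sqrt_le_one.2 ht₁.le)).symm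
    _ ≤ arcsin (√t) := sin_le (arcsin_nonneg.2 (sqrt_nonneg t))
  calc arcsin (√t) ^ (2 * a - 1) / √(t * (1 - t))
      ≤ √(t * (1 - t)) ^ (2 * a - 1) / √(t * (1 - t)) := by
        gcongr ?_ / _
        exact rpow_le_rpow_of_nonpos hq hle (by linarith)
    _ = t ^ (a - 1) * (1 - t) ^ (a - 1) := by
        rw [sqrt_eq_rpow, ← rpow_mul hp.le, ← rpow_sub hp, ← mul_rpow ht₀.le (by linarith)]
        ring_nf

theorem pi_div_four_rpow_div_le_integral {a : ℝ} (ha : 0 < a) (ha' : a ≤ 1 / 2) :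
    (π / 4) ^ (2 * a) / a ≤ ∫ t in (0 : ℝ)..1 / 2, t ^ (a - 1) * (1 - t) ^ (a - 1) := by
  have hhalf : arcsin (√2)⁻¹ = π / 4 := by
    rw [show (√2)⁻¹ = sin (π / 4) by rw [sin_pi_div_four]; field_simp; simp]
    exact arcsin_sin (by linarith [pi_pos]) (by linarith [pi_pos])
  have hint : IntegrableOn (fun t : ℝ => t ^ (a - 1) * (1 - t) ^ (a - 1)) (Set.Icc 0 (1 / 2)) :=
    (integrableOn_Icc_iff_integrableOn_Ioc).2
      ((intervalIntegrable_rpow_mul_one_sub_rpow ha ha).mono_set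
        (Set.uIcc_subset_uIcc_left (by norm_num [Set.mem_uIcc]))).1
  have hcont : ContinuousOn (fun t => arcsin (√t) ^ (2 * a) / a) (Set.Icc 0 (1 / 2)) :=
    ((continuous_arcsin.comp continuous_sqrt).continuousOn.rpow_const
      fun _ _ => Or.inr (by positivity)).div_const a
  have h := sub_le_integral_of_hasDeriv_right_of_le (by norm_num) hcont
    (fun t ht =>
      (hasDerivAt_arcsin_sqrt_rpow_div ha.ne' ht.1 (by linarith [ht.2])).hasDerivWithinAt)
    hint (fun t ht => arcsin_sqrt_rpow_div_le ha' ht.1 (by linarith [ht.2]))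
  simpa [hhalf, zero_rpow (by positivity : 2 * a ≠ 0)] using h

theorem pi_lt_two_mul_mul_beta_self {a : ℝ} (ha : 0 < a) (ha' : a < 1 / 2) :
    π < 2 * a * beta a a := by
  have hpow : π / 4 < (π / 4) ^ (2 * a) := by
    simpa using rpow_lt_rpow_of_exponent_gt (x := π / 4) (y := 1) (by positivity)
      (by linarith [pi_lt_four]) (by linarith)
  calc π < 4 * (π / 4) ^ (2 * a) := by linarith
    _ = 2 * a * (2 * ((π / 4) ^ (2 * a) / a)) := by field_simp; ring
    _ ≤ 2 * a * beta a a := by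
        rw [beta_self_eq_two_mul_integral ha]
        gcongr
        exact pi_div_four_rpow_div_le_integral ha ha'.le

theorem sin_mul_beta_one_sub_two_mul {a : ℝ} (ha : 0 < a) (ha' : a < 1) :
    sin (π * a) * beta (1 - a) (2 * a) = π / (a * beta a a) := by
  have hsin : sin (π * a) ≠ 0 :=
    (sin_pos_of_pos_of_lt_pi (by positivity) (by nlinarith [pi_pos])).ne'
  have hΓ := Gamma_pos_of_pos ha
  have h2Γ := Gamma_pos_of_pos (by linarith : 0 < 2 * a)
  have hrefl : Gamma a * Gamma (1 - a) * sin (π * a) = π := by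
    rw [Gamma_mul_Gamma_one_sub, div_mul_cancel₀ _ hsin]
  rw [beta, beta, show 1 - a + 2 * a = a + 1 by ring, Gamma_add_one ha.ne', ← two_mul]
  field_simp
  linear_combination hrefl

theorem sin_mul_beta_one_sub_two_mul_lt_two {a : ℝ} (ha : 0 < a) (ha' : a < 1 / 2) :
    sin (π * a) * beta (1 - a) (2 * a) < 2 := by
  have hB := pi_lt_two_mul_mul_beta_self ha ha'
  rw [sin_mul_beta_one_sub_two_mul ha (by linarith), div_lt_iff₀ (by nlinarith [pi_pos])]
  linarith

theorem norm_TB_lt_two_div_pi {α τ : ℝ} (ξ : ℝ) (hα : 0 < α) (hα' : α < 1 / 2) (hτ : α ≤ τ) :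
    ‖TB α τ ξ‖ < 2 / π := by
  set u : ℂ := τ - 2 * α + 1 + Complex.I * ξ
  have hu : u.re = τ - 2 * α + 1 := by simp [u]
  have hv : (2 * (α : ℂ)).re = 2 * α := by simp
  have hsin : 0 < sin (π * α) := sin_pos_of_pos_of_lt_pi (by positivity) (by nlinarith [pi_pos])
  have hTB : TB α τ ξ = Complex.sin (π * α) / π * Complex.betaIntegral u (2 * α) := by
    rw [Complex.betaIntegral_eq_Gamma_mul_div _ _ (by linarith) (by linarith), TB,
      show u + 2 * α = τ + 1 + Complex.I * ξ by ring]
    ring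
  have hnorm : ‖TB α τ ξ‖ = sin (π * α) / π * ‖Complex.betaIntegral u (2 * α)‖ := by
    rw [hTB, norm_mul, norm_div, ← Complex.ofReal_mul, ← Complex.ofReal_sin, Complex.norm_real,
      Complex.norm_real, norm_of_nonneg hsin.le, norm_of_nonneg pi_pos.le]
  calc ‖TB α τ ξ‖ ≤ sin (π * α) / π * beta (1 - α) (2 * α) := by
        rw [hnorm]
        gcongr
        refine (Complex.norm_betaIntegral_le (by linarith) (by linarith)).trans ?_
        rw [hu, hv]
        exact beta_le_beta_of_le_left (by linarith) (by linarith) (by linarith)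
    _ = sin (π * α) * beta (1 - α) (2 * α) / π := by ring
    _ < 2 / π := by gcongr; exact sin_mul_beta_one_sub_two_mul_lt_two hα hα'

theorem abs_Ts_gt_two_div_pi_gt_abs_TB
    (α τ ξ : ℝ) (hα : 0 < α) (hα' : α < 1 / 2) (hτ : α ≤ τ)
    (hξ : 1 / 4 ≤ ξ) :
    2 / Real.pi < ‖Ts α τ ξ‖ ∧ ‖TB α τ ξ‖ < 2 / Real.pi :=
  ⟨two_div_pi_lt_norm_Ts α τ hξ, norm_TB_lt_two_div_pi ξ hα hα' hτ⟩
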